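/- arXiv:math/0302313 — 3 statements merged into one kernel-verified Lean document; each statement's English description precedes it below -/
import Mathlib

section
/- For a partition [n] = R ∪ S ∪ T into disjoint subsets, the Alexander dual (within R) of the complex Δ_R^{S,T} equals (Δ*)_R^{T,S}, i.e. (Δ_R^{S,T})* = (Δ*)_R^{T,S}. -/
open Finset

namespace SCx

variable (k : Type) [Field k] {n : ℕ}

/-- An (abstract) simplicial complex on the vertex set `Fin n`:
a set of finsets closed under taking subsets. -/
def IsComplex (Δ : Set (Finset (Fin n))) : Prop :=
  ∀ F ∈ Δ, ∀ G ⊆ F, G ∈ Δ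

/-- Simplicial `p`-chains with coefficients in `k`: functions on the faces of
cardinality `p+1`. -/
abbrev Chains (Δ : Set (Finset (Fin n))) (p : ℤ) : Type :=
  {F : Finset (Fin n) // F ∈ Δ ∧ (F.card : ℤ) = p + 1} → k

open Classical in
/-- The underlying function of the simplicial boundary map, written via its
transpose formula:
`(∂ f) G = ∑_{x : insert x G ∈ Δ} (-1)^{pos of x in insert x G} f (insert x G)`. -/
noncomputable def boundaryFun (Δ : Set (Finset (Fin n))) (p : ℤ)
    (f : Chains k Δ p) : Chains k Δ (p - 1) := fun G => ∑ x : Fin n,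
  if h : x ∉ G.1 ∧ insert x G.1 ∈ Δ then
    (-1 : k) ^ (G.1.filter (fun y => y < x)).card *
      f ⟨insert x G.1, h.2, by
        have hc := G.2.2
        rw [Finset.card_insert_of_notMem h.1]
        push_cast at hc ⊢
        omega⟩
  else 0

/-- The simplicial boundary map. -/
noncomputable def boundary (Δ : Set (Finset (Fin n))) (p : ℤ) :
    Chains k Δ p →ₗ[k] Chains k Δ (p - 1) where
  toFun := boundaryFun k Δ p
  map_add' f g := by
    funext G
    unfold boundaryFun
    rw [Pi.add_apply]
    rw [← Finset.sum_add_distrib]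
    refine Finset.sum_congr rfl fun x _ => ?_
    split_ifs with h
    · rw [Pi.add_apply]; ring
    · rw [add_zero]
  map_smul' c f := by
    funext G
    unfold boundaryFun
    simp only [RingHom.id_apply, Pi.smul_apply, smul_eq_mul, Finset.mul_sum]
    refine Finset.sum_congr rfl fun x _ => ?_
    split_ifs with h
    · ring
    · rw [mul_zero]

/-- Transport of chains along an equality of degrees. -/
noncomputable def chainsCongr (Δ : Set (Finset (Fin n))) {p q : ℤ} (h : p = q) :
    Chains k Δ p ≃ₗ[k] Chains k Δ q := by
  subst h; exact LinearEquiv.refl k _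

noncomputable def cycles (Δ : Set (Finset (Fin n))) (p : ℤ) : Submodule k (Chains k Δ p) :=
  LinearMap.ker (boundary k Δ p)

noncomputable def boundaries (Δ : Set (Finset (Fin n))) (p : ℤ) : Submodule k (Chains k Δ p) :=
  LinearMap.range ((chainsCongr k Δ (show p + 1 - 1 = p by ring)).toLinearMap ∘ₗ
    boundary k Δ (p + 1))

/-- Reduced simplicial homology of `Δ` in degree `p`, with coefficients in the field `k`,
defined as cycles modulo (boundaries intersected with cycles).  With this convention
`H̃_{-1}({∅}) = k`. -/
abbrev ReducedHomology (Δ : Set (Finset (Fin n))) (p : ℤ) :=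
  ↥(cycles k Δ p) ⧸ (Submodule.comap (cycles k Δ p).subtype (boundaries k Δ p))

/-- The Alexander dual of `Δ`. -/
def dual (Δ : Set (Finset (Fin n))) : Set (Finset (Fin n)) := {F | Fᶜ ∉ Δ}

/-- The restriction `Δ_R` of `Δ` to a vertex subset `R`. -/
def restrict (Δ : Set (Finset (Fin n))) (R : Finset (Fin n)) : Set (Finset (Fin n)) :=
  {F | F ∈ Δ ∧ F ⊆ R}

/-- The link `lk_Δ S`. -/
def link (Δ : Set (Finset (Fin n))) (S : Finset (Fin n)) : Set (Finset (Fin n)) :=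
  {F | Disjoint F S ∧ F ∪ S ∈ Δ}

/-- `Δ_R^{S,T} = {F ⊆ R : F ∪ S ∈ Δ}` (for `T` the complement of `R ∪ S`). -/
def sub (Δ : Set (Finset (Fin n))) (R S : Finset (Fin n)) : Set (Finset (Fin n)) :=
  {F | F ⊆ R ∧ F ∪ S ∈ Δ}

/-- `Δ` has dimension `d - 1`, i.e. `d` is the maximal cardinality of a face. -/
def IsDim (Δ : Set (Finset (Fin n))) (d : ℕ) : Prop :=
  (∀ F ∈ Δ, F.card ≤ d) ∧ ∃ F ∈ Δ, F.card = d

/-- `Δ` has frame dimension `c - 1`, i.e. `c` is the largest integer such that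
every `c`-subset of `[n]` is a face of `Δ`. -/
def IsFrame (Δ : Set (Finset (Fin n))) (c : ℕ) : Prop :=
  (∀ F : Finset (Fin n), F.card ≤ c → F ∈ Δ) ∧
    ∃ F : Finset (Fin n), F.card = c + 1 ∧ F ∉ Δ

/-- A facet: a maximal face. -/
def IsFacet (Δ : Set (Finset (Fin n))) (F : Finset (Fin n)) : Prop :=
  F ∈ Δ ∧ ∀ G ∈ Δ, F ⊆ G → F = G

theorem compl_sup_eq_sdiff_sup {α : Type*} [BooleanAlgebra α] {F R S T : α} (hFR : F ≤ R)
    (hRS : Disjoint R S) (hRST : IsCompl (R ⊔ S) T) : (F ⊔ T)ᶜ = R \ F ⊔ S := by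
  have hSF : S ⊓ Fᶜ = S :=
    inf_eq_left.mpr (le_compl_iff_disjoint_right.mpr (hRS.symm.mono_right hFR))
  rw [compl_sup, hRST.symm.compl_eq, inf_comm, inf_sup_right, ← sdiff_eq, hSF]

theorem stmt1_general {n : ℕ} (Δ : Set (Finset (Fin n)))
    (R S T : Finset (Fin n)) (hRS : Disjoint R S) (hRT : Disjoint R T)
    (hST : Disjoint S T) (hcov : R ∪ S ∪ T = Finset.univ) :
    {F : Finset (Fin n) | F ⊆ R ∧ R \ F ∉ sub Δ R S} = sub (dual Δ) R T := by
  have hRST : IsCompl (R ∪ S) T := ⟨hRT.sup_left hST, codisjoint_iff.mpr hcov⟩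
  ext F
  simp only [sub, dual, Set.mem_ofPred_eq, sdiff_subset, true_and]
  refine and_congr_right fun hFR => ?_
  rw [show (F ∪ T)ᶜ = R \ F ∪ S from compl_sup_eq_sdiff_sup hFR hRS hRST]

/-- `(Δ_R^{S,T})* = (Δ*)_R^{T,S}`, the Alexander dual being taken
within the vertex set `R`. -/
theorem stmt1 {n : ℕ} (Δ : Set (Finset (Fin n))) (hΔ : IsComplex Δ)
    (R S T : Finset (Fin n)) (hRS : Disjoint R S) (hRT : Disjoint R T)
    (hST : Disjoint S T) (hcov : R ∪ S ∪ T = Finset.univ) :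
    {F : Finset (Fin n) | F ⊆ R ∧ R \ F ∉ sub Δ R S} = sub (dual Δ) R T :=
  stmt1_general Δ R S T hRS hRT hST hcov

end SCx
end

section
/- If Δ is a simplicial complex on [n] that is neither the full (n-1)-simplex nor the empty complex, and c is the largest integer such that all c-subsets of [n] are faces of Δ, then there exists a face S of Δ with H̃_{c-1}(lk_Δ S) ≠ 0. -/
open Finset

namespace SCx

variable (k : Type) [Field k] {n : ℕ}

/-!
Let `M` be a non-face with `c + 1` vertices. The boundary of the simplex `M` is a `(c-1)`-cycle of
`Δ|_M = (lk_Δ ∅)|_M` that does not bound there, since `M ∉ Δ`. Now add the remaining vertices one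
at a time, keeping a non-bounding `(c-1)`-cycle `u` of `(lk_Δ T)|_W`: if `u` still does not bound
in `(lk_Δ T)|_{W ∪ v}`, put `v` into `W`; if `u = ∂ w` there, the part of `w` through `v` gives a
non-bounding cycle of `(lk_Δ (T ∪ v))|_W`. Once `T ∪ W = [n]`, `(lk_Δ T)|_W = lk_Δ T`.
-/

section FullBoundary

variable {R : Type*} [CommRing R]

noncomputable def sgn (R : Type*) [CommRing R] (G : Finset (Fin n)) (x : Fin n) : R :=
  (-1) ^ #{y ∈ G | y < x}

lemma sgn_mul_self (G : Finset (Fin n)) (x : Fin n) : sgn R G x * sgn R G x = 1 := by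
  rw [sgn, ← pow_add, Even.neg_one_pow ⟨_, rfl⟩]

lemma sgn_ne_zero [Nontrivial R] (G : Finset (Fin n)) (x : Fin n) : sgn R G x ≠ 0 :=
  ((isUnit_neg_one).pow _).ne_zero

lemma sgn_insert_of_notMem {G : Finset (Fin n)} {x : Fin n} (hx : x ∉ G) (y : Fin n) :
    sgn R (insert x G) y = sgn R G y * (if x < y then -1 else 1) := by
  unfold sgn
  rw [filter_insert]
  split_ifs with h
  · rw [card_insert_of_notMem (fun hm => hx (mem_filter.1 hm).1), pow_succ]
  · rw [mul_one]

lemma sgn_mul_sgn_insert_add {G : Finset (Fin n)} {x y : Fin n} (hx : x ∉ G) (hy : y ∉ G)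
    (hxy : x ≠ y) :
    sgn R G x * sgn R (insert x G) y + sgn R G y * sgn R (insert y G) x = 0 := by
  rw [sgn_insert_of_notMem hx, sgn_insert_of_notMem hy]
  rcases hxy.lt_or_gt with h | h
  · rw [if_pos h, if_neg h.asymm]; ring
  · rw [if_neg h.asymm, if_pos h]; ring

/-- The boundary map of the full simplex on `Fin n` in all degrees at once: a chain is any
function on finsets, and the chains of a complex are those supported on its faces. -/
noncomputable def fullBoundary (R : Type*) [CommRing R] :
    (Finset (Fin n) → R) →ₗ[R] (Finset (Fin n) → R) where
  toFun f G := ∑ x ∈ Gᶜ, sgn R G x * f (insert x G)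
  map_add' f g := by
    funext G
    simp only [Pi.add_apply, mul_add, sum_add_distrib]
  map_smul' r f := by
    funext G
    simp only [Pi.smul_apply, smul_eq_mul, RingHom.id_apply, mul_sum]
    exact sum_congr rfl fun _ _ => by ring

lemma fullBoundary_apply (f : Finset (Fin n) → R) (G : Finset (Fin n)) :
    fullBoundary R f G = ∑ x ∈ Gᶜ, sgn R G x * f (insert x G) := rfl

theorem fullBoundary_fullBoundary (f : Finset (Fin n) → R) :
    fullBoundary R (fullBoundary R f) = 0 := by
  funext G
  simp only [fullBoundary_apply, compl_insert, mul_sum, sum_sigma', Pi.zero_apply]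
  refine sum_involution (fun p _ => ⟨p.2, p.1⟩) ?_ ?_ ?_ ?_
  · rintro ⟨x, y⟩ hp
    simp only [mem_sigma, mem_erase, mem_compl] at hp
    rw [insert_comm y x, ← mul_assoc, ← mul_assoc, ← add_mul,
      sgn_mul_sgn_insert_add hp.1 hp.2.2 hp.2.1.symm, zero_mul]
  · rintro ⟨x, y⟩ hp _ h
    simp only [mem_sigma, mem_erase] at hp
    exact hp.2.1 (congrArg Sigma.fst h)
  · rintro ⟨x, y⟩ hp
    simp only [mem_sigma, mem_erase] at hp ⊢
    exact ⟨hp.2.2, hp.2.1.symm, hp.1⟩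
  · rintro ⟨x, y⟩ _
    rfl

lemma fullBoundary_apply_of_notMem {v : Fin n} {G : Finset (Fin n)} (hv : v ∉ G)
    (f : Finset (Fin n) → R) :
    fullBoundary R f G =
      fullBoundary R ({F | v ∉ F}.indicator f) G + sgn R G v * f (insert v G) := by
  have hvG : v ∈ Gᶜ := mem_compl.2 hv
  rw [fullBoundary_apply, fullBoundary_apply, ← add_sum_erase _ _ hvG,
    ← add_sum_erase _ _ hvG, Set.indicator_of_notMem (by simp), mul_zero, zero_add, add_comm]
  congr 1
  refine sum_congr rfl fun x hx => ?_
  rw [Set.indicator_of_mem]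
  simpa [hv] using (ne_of_mem_erase hx).symm

lemma fullBoundary_apply_of_mem {v : Fin n} {G : Finset (Fin n)} (hv : v ∈ G)
    {f : Finset (Fin n) → R} (hf : ∀ F, v ∈ F → f F = 0) : fullBoundary R f G = 0 :=
  sum_eq_zero fun x _ => by rw [hf _ (mem_insert_of_mem hv), mul_zero]

end FullBoundary

section NontrivialCycles

variable {R : Type*} [CommRing R]

/-- Chains are graded by the cardinality `m` of faces, i.e. by dimension `m - 1`. -/
def IsChain (A : Set (Finset (Fin n))) (m : ℕ) (f : Finset (Fin n) → R) : Prop :=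
  ∀ G, f G ≠ 0 → G ∈ A ∧ G.card = m

def IsNontrivialCycle (A : Set (Finset (Fin n))) (m : ℕ) (u : Finset (Fin n) → R) : Prop :=
  IsChain A m u ∧ fullBoundary R u = 0 ∧ ∀ w, IsChain A (m + 1) w → fullBoundary R w ≠ u

variable {A B : Set (Finset (Fin n))} {m : ℕ}

lemma IsChain.mono {f : Finset (Fin n) → R} (hf : IsChain A m f) (hAB : A ⊆ B) :
    IsChain B m f :=
  fun G hG => ⟨hAB (hf G hG).1, (hf G hG).2⟩

lemma IsChain.add {f g : Finset (Fin n) → R} (hf : IsChain A m f) (hg : IsChain A m g) :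
    IsChain A m (f + g) := by
  intro G hG
  by_cases hfG : f G = 0
  · exact hg G (by simpa [hfG] using hG)
  · exact hf G hfG

lemma IsChain.fullBoundary (hA : IsComplex A) {f : Finset (Fin n) → R}
    (hf : IsChain A (m + 1) f) : IsChain A m (fullBoundary R f) := by
  intro G hG
  obtain ⟨x, hx, hfx⟩ := exists_ne_zero_of_sum_ne_zero hG
  obtain ⟨hmem, hcard⟩ := hf _ (right_ne_zero_of_mul hfx)
  rw [card_insert_of_notMem (mem_compl.1 hx)] at hcard
  exact ⟨hA _ hmem G (subset_insert x G), by omega⟩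

lemma IsNontrivialCycle.nonempty {u : Finset (Fin n) → R} (hu : IsNontrivialCycle A m u) :
    A.Nonempty := by
  obtain ⟨G, hG⟩ : ∃ G, u G ≠ 0 := by
    by_contra! hu₀
    exact hu.2.2 0 (fun G hG => absurd rfl hG) (by rw [map_zero]; exact (funext hu₀).symm)
  exact ⟨G, (hu.1 G hG).1⟩

end NontrivialCycles

section Links

variable {R : Type*} [CommRing R] {A : Set (Finset (Fin n))} {m : ℕ}

lemma isComplex_link {Δ : Set (Finset (Fin n))} (hΔ : IsComplex Δ) (T : Finset (Fin n)) :
    IsComplex (link Δ T) :=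
  fun _ hF _ hGF => ⟨disjoint_of_subset_left hGF hF.1, hΔ _ hF.2 _ (union_subset_union_left hGF)⟩

lemma link_empty (Δ : Set (Finset (Fin n))) : link Δ ∅ = Δ := by
  ext F; simp [link]

lemma link_link_singleton (Δ : Set (Finset (Fin n))) {T : Finset (Fin n)} {v : Fin n}
    (hv : v ∉ T) : link (link Δ T) {v} = link Δ (insert v T) := by
  ext F
  simp only [link, Set.mem_ofPred_eq, disjoint_singleton_right, disjoint_insert_right,
    disjoint_union_left, union_assoc, singleton_union, disjoint_singleton_left, hv,
    not_false_eq_true, and_true]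
  tauto

lemma mem_of_mem_link {Δ : Set (Finset (Fin n))} (hΔ : IsComplex Δ) {S G : Finset (Fin n)}
    (hG : G ∈ link Δ S) : S ∈ Δ :=
  hΔ _ hG.2 S subset_union_right

lemma restrict_link_of_forall_mem_union (Δ : Set (Finset (Fin n))) {T W : Finset (Fin n)}
    (hTW : ∀ v, v ∈ T ∪ W) : restrict (link Δ T) W = link Δ T := by
  ext F
  refine ⟨And.left, fun hF => ⟨hF, fun x hx => ?_⟩⟩
  have := hTW x
  simp only [mem_union] at this
  exact this.resolve_left (disjoint_left.1 hF.1 hx)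

lemma IsChain.indicator_notMem_of_insert {W : Finset (Fin n)} {v : Fin n}
    {w : Finset (Fin n) → R} (hw : IsChain (restrict A (insert v W)) m w) :
    IsChain (restrict A W) m ({F | v ∉ F}.indicator w) := by
  intro G hG
  have hvG : v ∉ G := by by_contra h; exact hG (Set.indicator_of_notMem (by simpa) _)
  rw [Set.indicator_of_mem (by simpa)] at hG
  obtain ⟨⟨hGA, hGW⟩, hcard⟩ := hw G hG
  exact ⟨⟨hGA, fun x hx => (mem_insert.1 (hGW hx)).resolve_left (by rintro rfl; exact hvG hx)⟩,
    hcard⟩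

/-- On faces avoiding `v` the new cycle is the contraction `G ↦ ± w (G ∪ {v})`; a filling `b` of
it in `(lk_A v)|_W` would make `w|_{v ∉ ·} + b` a filling of `∂ w` in `A|_W`. -/
theorem IsNontrivialCycle.link_singleton (hA : IsComplex A) {W : Finset (Fin n)} {v : Fin n}
    (hv : v ∉ W) {w : Finset (Fin n) → R} (hu : IsNontrivialCycle (restrict A W) m
      (fullBoundary R w)) (hw : IsChain (restrict A (insert v W)) (m + 1) w) :
    IsNontrivialCycle (restrict (link A {v}) W) m
      (fullBoundary R w - fullBoundary R ({F | v ∉ F}.indicator w)) := by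
  set w₀ := {F | v ∉ F}.indicator w
  have hchain : IsChain (restrict (link A {v}) W) m (fullBoundary R w - fullBoundary R w₀) := by
    intro G hG
    by_cases hvG : v ∈ G
    · have hu₀ : fullBoundary R w G = 0 := by
        by_contra h
        exact hv ((hu.1 G h).1.2 hvG)
      rw [Pi.sub_apply, hu₀, fullBoundary_apply_of_mem hvG
        (fun F hF => Set.indicator_of_notMem (by simpa) _), sub_zero] at hG
      exact absurd rfl hG
    · rw [Pi.sub_apply, fullBoundary_apply_of_notMem hvG, add_sub_cancel_left] at hG
      obtain ⟨⟨hGA, hGW⟩, hcard⟩ := hw _ (right_ne_zero_of_mul hG)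
      rw [card_insert_of_notMem hvG] at hcard
      refine ⟨⟨⟨disjoint_singleton_right.2 hvG, by rwa [union_comm, ← insert_eq]⟩, ?_⟩,
        by omega⟩
      exact fun x hx => (mem_insert.1 (hGW (mem_insert_of_mem hx))).resolve_left
        (by rintro rfl; exact hvG hx)
  refine ⟨hchain, by rw [map_sub, fullBoundary_fullBoundary, fullBoundary_fullBoundary,
    sub_zero], fun b hb hbu => hu.2.2 (w₀ + b) (hw.indicator_notMem_of_insert.add (hb.mono ?_)) ?_⟩
  · exact fun G ⟨hG, hGW⟩ => ⟨hA _ hG.2 _ subset_union_left, hGW⟩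
  · rw [map_add, hbu, add_sub_cancel]

end Links

section Simplex

variable {R : Type*} [CommRing R]

lemma fullBoundary_single_apply_erase {M : Finset (Fin n)} {x : Fin n} (hx : x ∈ M) :
    fullBoundary R (Pi.single M 1) (M.erase x) = sgn R (M.erase x) x := by
  rw [fullBoundary_apply, sum_eq_single_of_mem x (by simp), insert_erase hx, Pi.single_eq_same,
    mul_one]
  intro y _ hyx
  rw [Pi.single_eq_of_ne, mul_zero]
  intro h
  have hx' : x ∈ insert y (M.erase x) := by rw [h]; exact hx
  exact hyx ((mem_insert.1 hx').resolve_right (notMem_erase x M)).symm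

theorem isNontrivialCycle_fullBoundary_single [Nontrivial R] {A : Set (Finset (Fin n))} {m : ℕ}
    {M : Finset (Fin n)} (hMA : M ∉ A) (hMcard : M.card = m + 1)
    (hfacets : ∀ G ⊆ M, G.card = m → G ∈ A) :
    IsNontrivialCycle (restrict A M) m (fullBoundary R (Pi.single M 1)) := by
  refine ⟨fun G hG => ?_, fullBoundary_fullBoundary _, fun w hw hwM => ?_⟩
  · obtain ⟨x, hx, hxG⟩ := exists_ne_zero_of_sum_ne_zero hG
    have hxGM : insert x G = M := by
      by_contra h
      rw [Pi.single_eq_of_ne h, mul_zero] at hxG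
      exact hxG rfl
    have hcard := card_insert_of_notMem (mem_compl.1 hx)
    rw [hxGM] at hcard
    have hGM : G ⊆ M := hxGM ▸ subset_insert x G
    exact ⟨⟨hfacets G hGM (by omega), hGM⟩, by omega⟩
  · have hw0 : w = 0 := by
      funext G
      by_contra hG
      obtain ⟨⟨hGA, hGM⟩, hcard⟩ := hw G hG
      exact hMA (eq_of_subset_of_card_le hGM (by omega) ▸ hGA)
    obtain ⟨x, hx⟩ : M.Nonempty := card_pos.1 (by omega)
    have := congrFun hwM (M.erase x)
    rw [hw0, map_zero, fullBoundary_single_apply_erase hx] at this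
    exact sgn_ne_zero _ _ this.symm

end Simplex

lemma card_compl_insert_union_lt {T W : Finset (Fin n)} {v : Fin n} (hv : v ∉ T ∪ W) :
    #(insert v T ∪ W)ᶜ < #(T ∪ W)ᶜ :=
  card_lt_card (compl_lt_compl_iff_lt.2 (insert_union v T W ▸ ssubset_insert hv))

lemma card_compl_union_insert_lt {T W : Finset (Fin n)} {v : Fin n} (hv : v ∉ T ∪ W) :
    #(T ∪ insert v W)ᶜ < #(T ∪ W)ᶜ :=
  card_lt_card (compl_lt_compl_iff_lt.2 (union_insert v T W ▸ ssubset_insert hv))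

theorem exists_isNontrivialCycle_link {R : Type*} [CommRing R] {Δ : Set (Finset (Fin n))}
    (hΔ : IsComplex Δ) {m : ℕ} (T W : Finset (Fin n)) {u : Finset (Fin n) → R}
    (hu : IsNontrivialCycle (restrict (link Δ T) W) m u) :
    ∃ S, ∃ u' : Finset (Fin n) → R, IsNontrivialCycle (link Δ S) m u' := by
  by_cases hTW : ∀ v, v ∈ T ∪ W
  · exact ⟨T, u, restrict_link_of_forall_mem_union Δ hTW ▸ hu⟩
  obtain ⟨v, hv⟩ := not_forall.1 hTW
  have hvT : v ∉ T := fun h => hv (mem_union_left W h)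
  have hvW : v ∉ W := fun h => hv (mem_union_right T h)
  by_cases hbd : ∃ w, IsChain (restrict (link Δ T) (insert v W)) (m + 1) w ∧
      fullBoundary R w = u
  · obtain ⟨w, hw, rfl⟩ := hbd
    have hlk := hu.link_singleton (isComplex_link hΔ T) hvW hw
    rw [link_link_singleton Δ hvT] at hlk
    exact exists_isNontrivialCycle_link hΔ (insert v T) W hlk
  · push Not at hbd
    exact exists_isNontrivialCycle_link hΔ T (insert v W)
      ⟨hu.1.mono fun G hG => ⟨hG.1, hG.2.trans (subset_insert v W)⟩, hu.2.1, hbd⟩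
termination_by #(T ∪ W)ᶜ
decreasing_by
  · exact card_compl_insert_union_lt hv
  · exact card_compl_union_insert_lt hv

section Homology

variable {k} {A : Set (Finset (Fin n))}

open Classical in
noncomputable def extendByZero {p : ℤ} (f : Chains k A p) : Finset (Fin n) → k :=
  fun G => if h : G ∈ A ∧ (G.card : ℤ) = p + 1 then f ⟨G, h⟩ else 0

lemma isChain_extendByZero {p : ℤ} {m : ℕ} (hm : (m : ℤ) = p + 1) (f : Chains k A p) :
    IsChain A m (extendByZero f) := by
  intro G hG
  unfold extendByZero at hG
  split_ifs at hG with h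
  · exact ⟨h.1, by omega⟩
  · exact absurd rfl hG

lemma boundary_apply_eq_fullBoundary {p : ℤ} (f : Chains k A p)
    (G : {F : Finset (Fin n) // F ∈ A ∧ (F.card : ℤ) = p - 1 + 1}) :
    boundary k A p f G = fullBoundary k (extendByZero f) G.1 := by
  rw [boundary, LinearMap.coe_mk, AddHom.coe_mk, boundaryFun, fullBoundary_apply]
  refine (sum_subset (subset_univ _) fun x _ hx =>
    dif_neg fun h => h.1 (by simpa using hx)).symm.trans (sum_congr rfl fun x hx => ?_)
  have hcard : ((insert x G.1).card : ℤ) = p + 1 := by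
    rw [card_insert_of_notMem (mem_compl.1 hx)]
    have := G.2.2
    push_cast
    omega
  by_cases hxA : insert x G.1 ∈ A
  · rw [dif_pos ⟨mem_compl.1 hx, hxA⟩, extendByZero, dif_pos ⟨hxA, hcard⟩]
    rfl
  · rw [dif_neg fun h => hxA h.2, extendByZero, dif_neg fun h => hxA h.1, mul_zero]

lemma chainsCongr_apply {p q : ℤ} (h : p = q) (f : Chains k A p)
    (F : {F : Finset (Fin n) // F ∈ A ∧ (F.card : ℤ) = q + 1}) :
    chainsCongr k A h f F = f ⟨F.1, F.2.1, h ▸ F.2.2⟩ := by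
  subst h; rfl

theorem IsNontrivialCycle.not_subsingleton_reducedHomology (hA : IsComplex A) {m : ℕ}
    {u : Finset (Fin n) → k} (hu : IsNontrivialCycle A m u) :
    ¬ Subsingleton (ReducedHomology k A ((m : ℤ) - 1)) := by
  set u' : Chains k A ((m : ℤ) - 1) := fun F => u F.1
  have hext : extendByZero u' = u := by
    funext G
    unfold extendByZero
    split_ifs with h
    · rfl
    · by_contra hG
      exact h ⟨(hu.1 G (Ne.symm hG)).1, by rw [(hu.1 G (Ne.symm hG)).2]; ring⟩
  have hcyc : u' ∈ cycles k A ((m : ℤ) - 1) := by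
    ext G
    rw [boundary_apply_eq_fullBoundary, hext, hu.2.1]
    rfl
  intro hsub
  have hzero := Subsingleton.elim
    (Submodule.Quotient.mk ⟨u', hcyc⟩ : ReducedHomology k A ((m : ℤ) - 1)) 0
  rw [Submodule.Quotient.mk_eq_zero, Submodule.mem_comap] at hzero
  obtain ⟨w', hw'⟩ := hzero
  have hw : IsChain A (m + 1) (extendByZero w') := isChain_extendByZero (by push_cast; ring) w'
  refine hu.2.2 _ hw (funext fun G => ?_)
  by_cases hG : G ∈ A ∧ G.card = m
  · have := congrFun hw' ⟨G, hG.1, by rw [hG.2]; ring⟩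
    rw [LinearMap.comp_apply, LinearEquiv.coe_coe, chainsCongr_apply,
      boundary_apply_eq_fullBoundary] at this
    exact this
  · rw [not_imp_comm.1 ((hw.fullBoundary hA) G) hG, not_imp_comm.1 (hu.1 G) hG]

end Homology

theorem stmt3_general (k : Type) [Field k] {n : ℕ} (Δ : Set (Finset (Fin n)))
    (hΔ : IsComplex Δ)
    (c : ℕ) (hc : IsFrame Δ c) :
    ∃ S ∈ Δ, ¬ Subsingleton (ReducedHomology k (link Δ S) ((c : ℤ) - 1)) := by
  obtain ⟨hframe, M, hMcard, hM⟩ := hc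
  have hsphere :
      IsNontrivialCycle (restrict (link Δ ∅) M) c (fullBoundary k (Pi.single M 1)) := by
    rw [link_empty]
    exact isNontrivialCycle_fullBoundary_single hM hMcard fun G _ hG => hframe G hG.le
  obtain ⟨S, u, hu⟩ := exists_isNontrivialCycle_link hΔ ∅ M hsphere
  obtain ⟨G, hG⟩ := hu.nonempty
  exact ⟨S, mem_of_mem_link hΔ hG, hu.not_subsingleton_reducedHomology (isComplex_link hΔ S)⟩

/-- if `Δ` is neither the full simplex nor empty, some link has
nonvanishing reduced homology in degree `c - 1`. -/
theorem stmt3 (k : Type) [Field k] {n : ℕ} (Δ : Set (Finset (Fin n)))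
    (hΔ : IsComplex Δ) (hne : Δ ≠ ∅)
    (hfull : (Finset.univ : Finset (Fin n)) ∉ Δ)
    (c : ℕ) (hc : IsFrame Δ c) :
    ∃ S ∈ Δ, ¬ Subsingleton (ReducedHomology k (link Δ S) ((c : ℤ) - 1)) :=
  stmt3_general k Δ hΔ c hc

end SCx
end

section
/- A simplicial complex Δ on [n] with frame dimension c-1 is CLeray if and only if H̃_c(lk_Δ S) = 0 for all faces S of Δ. -/
/-!
Fix a vertex `v ∉ R`. Inside `X = Δ_{R ∪ v}^S` the faces avoiding `v` form the deletion
`A = Δ_R^S`, and the faces through `v` are the cones `v * G` over the faces `G` of the link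
`L = Δ_R^{S ∪ v}`. This is a short exact sequence of chain complexes `0 → A → X → L[-1] → 0`,
split degreewise by contraction with `v` and coning with `v`, and its long exact sequence
`H̃_{m+1}(A) → H̃_{m+1}(X) → H̃_m(L) → H̃_m(A) → H̃_m(X)` lets vanishing at two of three
consecutive places force vanishing at the third.

Since `Δ_R^∅ = Δ_R` and `Δ_{Sᶜ}^S = lk_Δ S`, both directions become statements about all
`Δ_R^S` with `R ∩ S = ∅`. If the restrictions are acyclic in degrees `≥ c`, adding vertices to
`S` one at a time keeps `Δ_R^S` acyclic in degrees `≥ c`. Conversely, by descending induction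
on `S`: in degree `c`, shrink `R` from `Sᶜ` (where `Δ_R^S` is the link, or void if `S ∉ Δ`);
in degrees `m + 1 > c`, grow `R` from `∅`, using the link `Δ_R^{S ∪ v}` in degree `m`.
-/

open Finset

namespace SCx

variable (k : Type) [Field k] {n : ℕ}

lemma sum_sum_eq_zero_of_antisymm {α M : Type*} [AddCommMonoid M] {s : Finset α}
    {T : α → α → M} (hT : ∀ x ∈ s, ∀ y ∈ s, T x y + T y x = 0) (hdiag : ∀ x ∈ s, T x x = 0) :
    ∑ x ∈ s, ∑ y ∈ s, T x y = 0 := by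
  rw [← sum_product']
  refine sum_involution (fun p _ => p.swap) (fun p hp => ?_) (fun p hp hne hswap => ?_)
    (fun p hp => mem_product.2 (mem_product.1 hp).symm) (fun p _ => p.swap_swap)
  · exact hT _ (mem_product.1 hp).1 _ (mem_product.1 hp).2
  · obtain ⟨x, y⟩ := p
    obtain rfl : y = x := congrArg Prod.fst hswap
    exact hne (hdiag _ (mem_product.1 hp).1)

section InsertSign

variable {K : Type*} [CommRing K]

def insertSign (G : Finset (Fin n)) (x : Fin n) : K :=
  (-1) ^ (G.filter (fun y => y < x)).card

lemma insertSign_mul_self (G : Finset (Fin n)) (x : Fin n) :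
    insertSign G x * insertSign G x = (1 : K) := by
  rw [insertSign, ← pow_add, ← two_mul, pow_mul, neg_one_sq, one_pow]

lemma isUnit_insertSign (G : Finset (Fin n)) (x : Fin n) : IsUnit (insertSign G x : K) :=
  isUnit_one.neg.pow _

lemma insertSign_insert_of_lt {x y : Fin n} {G : Finset (Fin n)} (hxy : x < y) (hx : x ∉ G) :
    insertSign (insert x G) y = -(insertSign G y : K) := by
  rw [insertSign, filter_insert, if_pos hxy,
    card_insert_of_notMem (fun h => hx (mem_filter.1 h).1), pow_succ, mul_neg_one, insertSign]

lemma insertSign_insert_of_gt {x y : Fin n} {G : Finset (Fin n)} (hxy : y < x) :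
    insertSign (insert x G) y = (insertSign G y : K) := by
  rw [insertSign, filter_insert, if_neg (lt_asymm hxy), insertSign]

lemma insertSign_mul_insertSign_swap {x y : Fin n} {G : Finset (Fin n)} (hxy : x ≠ y)
    (hx : x ∉ G) (hy : y ∉ G) :
    insertSign G x * insertSign (insert x G) y =
      -(insertSign G y * insertSign (insert y G) x : K) := by
  rcases hxy.lt_or_gt with h | h
  · rw [insertSign_insert_of_lt h hx, insertSign_insert_of_gt h]; ring
  · rw [insertSign_insert_of_gt h, insertSign_insert_of_lt h hy]; ring

end InsertSign

def simplexBoundary (K : Type*) [CommRing K] :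
    (Finset (Fin n) → K) →ₗ[K] (Finset (Fin n) → K) where
  toFun f G := ∑ x ∈ Gᶜ, insertSign G x * f (insert x G)
  map_add' f g := by ext G; simp only [Pi.add_apply, mul_add, sum_add_distrib]
  map_smul' a f := by
    ext G
    simp only [Pi.smul_apply, smul_eq_mul, RingHom.id_apply, mul_sum, mul_left_comm]

local notation "∂" => simplexBoundary _

section SimplexBoundary

variable {K : Type*} [CommRing K]

lemma simplexBoundary_apply (f : Finset (Fin n) → K) (G : Finset (Fin n)) :
    ∂ f G = ∑ x ∈ Gᶜ, insertSign G x * f (insert x G) := rfl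

lemma simplexBoundary_simplexBoundary (f : Finset (Fin n) → K) : ∂ (∂ f) = 0 := by
  ext G
  let T : Fin n → Fin n → K := fun x y =>
    if x = y then 0 else insertSign G x * (insertSign (insert x G) y * f (insert y (insert x G)))
  have hrow : ∀ x ∈ Gᶜ, insertSign G x * ∂ f (insert x G) = ∑ y ∈ Gᶜ, T x y := fun x _ => by
    rw [simplexBoundary_apply, compl_insert, mul_sum, ← sum_erase (Gᶜ) (if_pos rfl : T x x = 0)]
    exact sum_congr rfl fun y hy => (if_neg (ne_of_mem_erase hy).symm).symm
  rw [simplexBoundary_apply, sum_congr rfl hrow, Pi.zero_apply]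
  refine sum_sum_eq_zero_of_antisymm (fun x hx y hy => ?_) (fun x _ => if_pos rfl)
  rcases eq_or_ne x y with rfl | hxy
  · simp [T]
  rw [mem_compl] at hx hy
  simp only [T, if_neg hxy, if_neg hxy.symm, ← mul_assoc, insert_comm y x,
    insertSign_mul_insertSign_swap hxy hx hy, neg_mul, neg_add_cancel]

end SimplexBoundary

section FaceChains

variable (K : Type*) [CommRing K]

/-- The chains of every subcomplex live in `Finset (Fin n) → K`, all with the one boundary
operator `simplexBoundary`; they are graded by the cardinality `m` of faces, i.e. by
dimension `m - 1`. -/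
def faceChains (Δ : Set (Finset (Fin n))) (m : ℕ) : Submodule K (Finset (Fin n) → K) where
  carrier := {f | ∀ F, f F ≠ 0 → F ∈ Δ ∧ F.card = m}
  add_mem' {f g} hf hg F hF := by
    by_cases h : f F = 0
    · exact hg F (by simpa [h] using hF)
    · exact hf F h
  zero_mem' _ h := absurd rfl h
  smul_mem' a f hf F hF := hf F (right_ne_zero_of_mul hF)

def HomologyVanishes (Δ : Set (Finset (Fin n))) (m : ℕ) : Prop :=
  ∀ f ∈ faceChains K Δ (m + 1), ∂ f = 0 → ∃ g ∈ faceChains K Δ (m + 2), ∂ g = f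

variable {K} {Δ Δ' : Set (Finset (Fin n))} {m : ℕ}

lemma faceChains_mono (h : Δ ⊆ Δ') : faceChains K Δ m ≤ faceChains K Δ' m :=
  fun _ hf F hF => (hf F hF).imp_left (@h F)

lemma simplexBoundary_mem_faceChains (hΔ : IsComplex Δ) {f : Finset (Fin n) → K}
    (hf : f ∈ faceChains K Δ (m + 1)) : ∂ f ∈ faceChains K Δ m := by
  intro G hG
  obtain ⟨x, hx, hfx⟩ := exists_ne_zero_of_sum_ne_zero hG
  obtain ⟨hface, hcard⟩ := hf _ (right_ne_zero_of_mul hfx)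
  rw [card_insert_of_notMem (mem_compl.1 hx)] at hcard
  exact ⟨hΔ _ hface G (subset_insert x G), by omega⟩

lemma homologyVanishes_of_forall_card_ne (h : ∀ F ∈ Δ, F.card ≠ m + 1) :
    HomologyVanishes K Δ m := by
  refine fun f hf _ => ⟨0, zero_mem _, funext fun F => ?_⟩
  rw [map_zero, Pi.zero_apply, eq_comm]
  by_contra hF
  exact h F (hf F hF).1 (hf F hF).2

end FaceChains

section ContractCone

variable (K : Type*) [CommRing K]

def contract (v : Fin n) : (Finset (Fin n) → K) →ₗ[K] (Finset (Fin n) → K) where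
  toFun f G := if v ∈ G then 0 else insertSign G v * f (insert v G)
  map_add' f g := by ext G; by_cases h : v ∈ G <;> simp [h, mul_add]
  map_smul' a f := by ext G; by_cases h : v ∈ G <;> simp [h, mul_left_comm]

def cone (v : Fin n) : (Finset (Fin n) → K) →ₗ[K] (Finset (Fin n) → K) where
  toFun g F := if v ∈ F then insertSign (F.erase v) v * g (F.erase v) else 0
  map_add' f g := by ext F; by_cases h : v ∈ F <;> simp [h, mul_add]
  map_smul' a f := by ext F; by_cases h : v ∈ F <;> simp [h, mul_left_comm]

variable {K} {v : Fin n} {f g : Finset (Fin n) → K}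

lemma contract_apply_of_mem {G : Finset (Fin n)} (hv : v ∈ G) : contract K v f G = 0 :=
  if_pos hv

lemma contract_apply_of_notMem {G : Finset (Fin n)} (hv : v ∉ G) :
    contract K v f G = insertSign G v * f (insert v G) :=
  if_neg hv

lemma contract_apply_erase {F : Finset (Fin n)} (hv : v ∈ F) :
    contract K v f (F.erase v) = insertSign (F.erase v) v * f F := by
  rw [contract_apply_of_notMem (notMem_erase v F), insert_erase hv]

lemma cone_apply_of_mem {F : Finset (Fin n)} (hv : v ∈ F) :
    cone K v g F = insertSign (F.erase v) v * g (F.erase v) :=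
  if_pos hv

lemma cone_apply_of_notMem {F : Finset (Fin n)} (hv : v ∉ F) : cone K v g F = 0 :=
  if_neg hv

lemma contract_cone (hg : ∀ F, v ∈ F → g F = 0) : contract K v (cone K v g) = g := by
  ext G
  by_cases hv : v ∈ G
  · rw [contract_apply_of_mem hv, hg G hv]
  · rw [contract_apply_of_notMem hv, cone_apply_of_mem (mem_insert_self v G), erase_insert hv,
      ← mul_assoc, insertSign_mul_self, one_mul]

lemma contract_eq_zero (hf : ∀ F, v ∈ F → f F = 0) : contract K v f = 0 := by
  ext G
  by_cases hv : v ∈ G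
  · exact contract_apply_of_mem hv
  · rw [contract_apply_of_notMem hv, hf _ (mem_insert_self v G), mul_zero, Pi.zero_apply]

lemma contract_simplexBoundary (f : Finset (Fin n) → K) :
    contract K v (∂ f) = -∂ (contract K v f) := by
  ext G
  rw [Pi.neg_apply, simplexBoundary_apply]
  by_cases hv : v ∈ G
  · rw [contract_apply_of_mem hv, eq_comm, neg_eq_zero]
    exact sum_eq_zero fun x _ => by
      rw [contract_apply_of_mem (mem_insert_of_mem hv), mul_zero]
  have hskip : insertSign G v * contract K v f (insert v G) = 0 := by
    rw [contract_apply_of_mem (mem_insert_self v G), mul_zero]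
  rw [contract_apply_of_notMem hv, simplexBoundary_apply, mul_sum, compl_insert,
    ← sum_erase (Gᶜ) (f := fun x => insertSign G x * contract K v f (insert x G)) hskip,
    ← sum_neg_distrib]
  refine sum_congr rfl fun x hx => ?_
  obtain ⟨hxv, hxG⟩ := mem_erase.1 hx
  rw [mem_compl] at hxG
  rw [contract_apply_of_notMem (by simp [hxv.symm, hv]), insert_comm, ← mul_assoc, ← mul_assoc,
    insertSign_mul_insertSign_swap hxv.symm hv hxG, neg_mul]

end ContractCone

section DeletionLink

variable {K : Type*} [CommRing K] {Δ : Set (Finset (Fin n))} {R S : Finset (Fin n)} {v : Fin n}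
  {m : ℕ} {f g : Finset (Fin n) → K}

lemma IsComplex.sub (hΔ : IsComplex Δ) (R S : Finset (Fin n)) : IsComplex (sub Δ R S) :=
  fun _ hF _ hG => ⟨hG.trans hF.1, hΔ _ hF.2 _ (union_subset_union hG subset_rfl)⟩

lemma sub_subset_sub_insert : sub Δ R S ⊆ sub Δ (insert v R) S :=
  fun _ hF => ⟨hF.1.trans (subset_insert v R), hF.2⟩

lemma apply_eq_zero_of_mem_of_notMem (hv : v ∉ R) (hf : f ∈ faceChains K (sub Δ R S) m)
    {F : Finset (Fin n)} (hvF : v ∈ F) : f F = 0 := by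
  by_contra h
  exact hv ((hf F h).1.1 hvF)

lemma contract_mem_faceChains (hf : f ∈ faceChains K (sub Δ (insert v R) S) (m + 1)) :
    contract K v f ∈ faceChains K (sub Δ R (insert v S)) m := by
  intro G hG
  by_cases hvG : v ∈ G
  · exact absurd (contract_apply_of_mem hvG) hG
  rw [contract_apply_of_notMem hvG] at hG
  obtain ⟨⟨hsub, hface⟩, hcard⟩ := hf _ (right_ne_zero_of_mul hG)
  rw [card_insert_of_notMem hvG] at hcard
  refine ⟨⟨(insert_subset_insert_iff hvG).1 hsub, ?_⟩, by omega⟩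
  rwa [union_insert, ← insert_union]

lemma cone_mem_faceChains (hg : g ∈ faceChains K (sub Δ R (insert v S)) m) :
    cone K v g ∈ faceChains K (sub Δ (insert v R) S) (m + 1) := by
  intro F hF
  by_cases hvF : v ∈ F
  swap
  · exact absurd (cone_apply_of_notMem hvF) hF
  rw [cone_apply_of_mem hvF] at hF
  obtain ⟨⟨hsub, hface⟩, hcard⟩ := hg _ (right_ne_zero_of_mul hF)
  rw [union_insert, ← insert_union, insert_erase hvF] at hface
  exact ⟨⟨subset_insert_iff.2 hsub, hface⟩, by rw [← card_erase_add_one hvF, hcard]⟩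

lemma mem_faceChains_of_contract_eq_zero (hf : f ∈ faceChains K (sub Δ (insert v R) S) m)
    (h0 : contract K v f = 0) : f ∈ faceChains K (sub Δ R S) m := by
  intro F hF
  have hvF : v ∉ F := fun hvF => hF <| by
    have h := contract_apply_erase (f := f) hvF
    rw [h0, Pi.zero_apply, eq_comm] at h
    exact (isUnit_insertSign _ _).mul_right_eq_zero.1 h
  obtain ⟨⟨hsub, hface⟩, hcard⟩ := hf F hF
  exact ⟨⟨(subset_insert_iff_of_notMem hvF).1 hsub, hface⟩, hcard⟩

variable (hΔ : IsComplex Δ) (hv : v ∉ R)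
include hΔ hv

lemma exists_add_simplexBoundary_mem_faceChains
    (hL : HomologyVanishes K (sub Δ R (insert v S)) m)
    (hf : f ∈ faceChains K (sub Δ (insert v R) S) (m + 2)) (hcyc : ∂ (contract K v f) = 0) :
    ∃ w ∈ faceChains K (sub Δ (insert v R) S) (m + 3),
      f + ∂ w ∈ faceChains K (sub Δ R S) (m + 2) := by
  obtain ⟨u, hu, hdu⟩ := hL _ (contract_mem_faceChains hf) hcyc
  refine ⟨cone K v u, cone_mem_faceChains hu, mem_faceChains_of_contract_eq_zero
    (add_mem hf (simplexBoundary_mem_faceChains (hΔ.sub _ _) (cone_mem_faceChains hu))) ?_⟩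
  rw [map_add, contract_simplexBoundary,
    contract_cone fun _ => apply_eq_zero_of_mem_of_notMem hv hu, hdu, add_neg_cancel]

theorem homologyVanishes_sub_insert_left (hA : HomologyVanishes K (sub Δ R S) (m + 1))
    (hL : HomologyVanishes K (sub Δ R (insert v S)) m) :
    HomologyVanishes K (sub Δ (insert v R) S) (m + 1) := by
  intro f hf hcyc
  obtain ⟨w, hw, hfw⟩ := exists_add_simplexBoundary_mem_faceChains hΔ hv hL hf
    (by rw [← neg_eq_zero, ← contract_simplexBoundary, hcyc, map_zero])
  obtain ⟨g, hg, hdg⟩ := hA _ hfw (by rw [map_add, hcyc, simplexBoundary_simplexBoundary, add_zero])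
  exact ⟨g - w, sub_mem (faceChains_mono sub_subset_sub_insert hg) hw,
    by rw [map_sub, hdg, add_sub_cancel_right]⟩

theorem homologyVanishes_sub_of_insert (hL : HomologyVanishes K (sub Δ R (insert v S)) m)
    (hX : HomologyVanishes K (sub Δ (insert v R) S) m) : HomologyVanishes K (sub Δ R S) m := by
  intro f hf hcyc
  obtain ⟨h, hh, hdh⟩ := hX f (faceChains_mono sub_subset_sub_insert hf) hcyc
  obtain ⟨w, hw, hhw⟩ := exists_add_simplexBoundary_mem_faceChains hΔ hv hL hh <| by
    rw [← neg_eq_zero, ← contract_simplexBoundary, hdh,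
      contract_eq_zero fun _ => apply_eq_zero_of_mem_of_notMem hv hf]
  exact ⟨h + ∂ w, hhw, by rw [map_add, simplexBoundary_simplexBoundary, add_zero, hdh]⟩

theorem homologyVanishes_sub_insert_right (hX : HomologyVanishes K (sub Δ (insert v R) S) (m + 1))
    (hA : HomologyVanishes K (sub Δ R S) m) : HomologyVanishes K (sub Δ R (insert v S)) m := by
  intro g hg hcyc
  have hgv : ∀ F, v ∈ F → g F = 0 := fun _ => apply_eq_zero_of_mem_of_notMem hv hg
  have hd : ∂ (cone K v g) ∈ faceChains K (sub Δ R S) (m + 1) :=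
    mem_faceChains_of_contract_eq_zero
      (simplexBoundary_mem_faceChains (hΔ.sub _ _) (cone_mem_faceChains hg))
      (by rw [contract_simplexBoundary, contract_cone hgv, hcyc, neg_zero])
  obtain ⟨w, hw, hdw⟩ := hA _ hd (simplexBoundary_simplexBoundary _)
  obtain ⟨h, hh, hdh⟩ := hX (cone K v g - w)
    (sub_mem (cone_mem_faceChains hg) (faceChains_mono sub_subset_sub_insert hw))
    (by rw [map_sub, hdw, sub_self])
  refine ⟨-contract K v h, neg_mem (contract_mem_faceChains hh), ?_⟩
  rw [map_neg, ← contract_simplexBoundary, hdh, map_sub, contract_cone hgv,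
    contract_eq_zero fun _ => apply_eq_zero_of_mem_of_notMem hv hw, sub_zero]

end DeletionLink

section Induction

variable {K : Type*} [CommRing K] {Δ : Set (Finset (Fin n))} {c : ℕ}

lemma sub_empty_eq_restrict (Δ : Set (Finset (Fin n))) (R : Finset (Fin n)) :
    sub Δ R ∅ = restrict Δ R := by
  ext F
  simp [sub, restrict, and_comm]

lemma sub_compl_eq_link (Δ : Set (Finset (Fin n))) (S : Finset (Fin n)) :
    sub Δ Sᶜ S = link Δ S := by
  ext F
  simp [sub, link, subset_compl_iff_disjoint_right]

variable (hΔ : IsComplex Δ)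
include hΔ

theorem homologyVanishes_sub_of_restrict
    (hres : ∀ m ≥ c, ∀ R, HomologyVanishes K (restrict Δ R) m) (S : Finset (Fin n)) :
    ∀ R, Disjoint R S → ∀ m ≥ c, HomologyVanishes K (sub Δ R S) m := by
  induction S using Finset.induction_on with
  | empty =>
    intro R _ m hm
    rw [sub_empty_eq_restrict]
    exact hres m hm R
  | insert v S hvS ih =>
    intro R hRS m hm
    rw [disjoint_insert_right] at hRS
    exact homologyVanishes_sub_insert_right hΔ hRS.1
      (ih _ (disjoint_insert_left.2 ⟨hvS, hRS.2⟩) (m + 1) (by omega)) (ih R hRS.2 m hm)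

lemma homologyVanishes_sub_of_insert_of_compl {S : Finset (Fin n)}
    (hS : HomologyVanishes K (sub Δ Sᶜ S) c)
    (hins : ∀ v ∉ S, ∀ R, Disjoint R (insert v S) → HomologyVanishes K (sub Δ R (insert v S)) c)
    (R : Finset (Fin n)) : Disjoint R S → HomologyVanishes K (sub Δ R S) c := by
  refine R.strongDownwardInductionOn (n := Fintype.card (Fin n)) (fun R ih _ hRS => ?_)
    (card_le_univ R)
  by_cases hR : Sᶜ ⊆ R
  · rwa [(subset_compl_iff_disjoint_right.2 hRS).antisymm hR]
  obtain ⟨v, hvS, hvR⟩ := not_subset.1 hR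
  rw [mem_compl] at hvS
  exact homologyVanishes_sub_of_insert hΔ hvR (hins v hvS R (disjoint_insert_right.2 ⟨hvR, hRS⟩))
    (ih (card_le_univ _) (ssubset_insert hvR)
      (disjoint_insert_left.2 ⟨hvS, hRS⟩))

lemma homologyVanishes_sub_succ_of_insert {S : Finset (Fin n)} {m : ℕ}
    (hins : ∀ v ∉ S, ∀ R, Disjoint R (insert v S) → HomologyVanishes K (sub Δ R (insert v S)) m)
    (R : Finset (Fin n)) (hRS : Disjoint R S) : HomologyVanishes K (sub Δ R S) (m + 1) := by
  induction R using Finset.induction_on with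
  | empty =>
    refine homologyVanishes_of_forall_card_ne fun F hF => ?_
    rw [subset_empty.1 hF.1, card_empty]
    omega
  | insert v R hvR ih =>
    rw [disjoint_insert_left] at hRS
    exact homologyVanishes_sub_insert_left hΔ hvR (ih hRS.2)
      (hins v hRS.1 R (disjoint_insert_right.2 ⟨hvR, hRS.2⟩))

theorem homologyVanishes_sub_of_link (hlink : ∀ S ∈ Δ, HomologyVanishes K (link Δ S) c)
    (S : Finset (Fin n)) : ∀ R, Disjoint R S → ∀ m ≥ c, HomologyVanishes K (sub Δ R S) m := by
  refine S.strongDownwardInductionOn (n := Fintype.card (Fin n)) (fun S ih _ => ?_)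
    (card_le_univ S)
  have hins : ∀ v ∉ S, ∀ R, Disjoint R (insert v S) → ∀ m ≥ c,
      HomologyVanishes K (sub Δ R (insert v S)) m := fun v hv =>
    ih (card_le_univ _) (ssubset_insert hv)
  intro R hRS m hm
  rcases hm.eq_or_lt with rfl | hlt
  · refine homologyVanishes_sub_of_insert_of_compl hΔ ?_
      (fun v hv R hR => hins v hv R hR c le_rfl) R hRS
    by_cases hS : S ∈ Δ
    · rw [sub_compl_eq_link]
      exact hlink S hS
    · exact homologyVanishes_of_forall_card_ne fun F hF =>
        absurd (hΔ _ hF.2 S subset_union_right) hS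
  · obtain ⟨m, rfl⟩ := Nat.exists_eq_add_one_of_ne_zero (by omega : m ≠ 0)
    exact homologyVanishes_sub_succ_of_insert hΔ (fun v hv R hR => hins v hv R hR m (by omega))
      R hRS

theorem homologyVanishes_restrict_iff_link (c : ℕ) :
    (∀ m ≥ c, ∀ R, HomologyVanishes K (restrict Δ R) m) ↔
      ∀ S ∈ Δ, HomologyVanishes K (link Δ S) c := by
  refine ⟨fun hres S _ => ?_, fun hlink m hm R => ?_⟩
  · rw [← sub_compl_eq_link]
    exact homologyVanishes_sub_of_restrict hΔ hres S Sᶜ disjoint_compl_left c le_rfl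
  · rw [← sub_empty_eq_restrict]
    exact homologyVanishes_sub_of_link hΔ hlink ∅ R (disjoint_empty_right R) m hm

end Induction

section Bridge

variable {Δ : Set (Finset (Fin n))}

noncomputable abbrev extendChains (Δ : Set (Finset (Fin n))) (p : ℤ) :
    Chains k Δ p →ₗ[k] (Finset (Fin n) → k) :=
  Function.ExtendByZero.linearMap k Subtype.val

variable {k} {p : ℤ}

lemma extendChains_apply_of_mem (f : Chains k Δ p) {F : Finset (Fin n)}
    (hF : F ∈ Δ ∧ (F.card : ℤ) = p + 1) : extendChains k Δ p f F = f ⟨F, hF⟩ :=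
  Subtype.val_injective.extend_apply f _ ⟨F, hF⟩

lemma extendChains_apply_of_notMem (f : Chains k Δ p) {F : Finset (Fin n)}
    (hF : ¬(F ∈ Δ ∧ (F.card : ℤ) = p + 1)) : extendChains k Δ p f F = 0 :=
  Function.extend_apply' _ _ _ fun ⟨G, hG⟩ => hF (hG ▸ G.2)

lemma extendChains_injective : Function.Injective (extendChains k Δ p) :=
  Function.extend_injective Subtype.val_injective _

lemma extendChains_mem_faceChains {j : ℕ} (hj : (j : ℤ) = p + 1) (f : Chains k Δ p) :
    extendChains k Δ p f ∈ faceChains k Δ j := by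
  intro F hF
  by_contra h
  exact hF (extendChains_apply_of_notMem f fun ⟨hmem, hcard⟩ => h ⟨hmem, by omega⟩)

lemma exists_extendChains_eq {j : ℕ} (hj : (j : ℤ) = p + 1) {g : Finset (Fin n) → k}
    (hg : g ∈ faceChains k Δ j) : ∃ f : Chains k Δ p, extendChains k Δ p f = g := by
  refine ⟨fun F => g F.1, funext fun F => ?_⟩
  by_cases hF : F ∈ Δ ∧ (F.card : ℤ) = p + 1
  · exact extendChains_apply_of_mem _ hF
  · rw [extendChains_apply_of_notMem _ hF, eq_comm]
    by_contra h
    exact hF ⟨(hg F h).1, by rw [(hg F h).2, hj]⟩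

lemma extendChains_chainsCongr {q : ℤ} (h : p = q) (f : Chains k Δ p) :
    extendChains k Δ q (chainsCongr k Δ h f) = extendChains k Δ p f := by
  subst h
  rfl

lemma extendChains_boundary (hΔ : IsComplex Δ) (f : Chains k Δ p) :
    extendChains k Δ (p - 1) (boundary k Δ p f) = ∂ (extendChains k Δ p f) := by
  ext G
  rw [simplexBoundary_apply]
  by_cases hG : G ∈ Δ ∧ (G.card : ℤ) = p - 1 + 1
  · rw [extendChains_apply_of_mem _ hG, boundary, LinearMap.coe_mk, AddHom.coe_mk, boundaryFun,
      ← sum_subset (subset_univ Gᶜ) fun x _ hx => dif_neg fun h => h.1 (by simpa using hx)]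
    refine sum_congr rfl fun x hx => ?_
    rw [mem_compl] at hx
    by_cases hxG : insert x G ∈ Δ
    · have hcard : ((insert x G).card : ℤ) = p + 1 := by
        rw [card_insert_of_notMem hx]; push_cast; linarith [hG.2]
      rw [dif_pos ⟨hx, hxG⟩, extendChains_apply_of_mem _ ⟨hxG, hcard⟩]
      rfl
    · rw [dif_neg fun h => hxG h.2, extendChains_apply_of_notMem _ fun h => hxG h.1, mul_zero]
  · rw [extendChains_apply_of_notMem _ hG]
    refine (sum_eq_zero fun x hx => ?_).symm
    rw [extendChains_apply_of_notMem, mul_zero]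
    rintro ⟨hxG, hcard⟩
    rw [card_insert_of_notMem (mem_compl.1 hx)] at hcard
    exact hG ⟨hΔ _ hxG G (subset_insert x G), by push_cast at hcard; omega⟩

theorem subsingleton_reducedHomology_iff (hΔ : IsComplex Δ) (m : ℕ) :
    Subsingleton (ReducedHomology k Δ m) ↔ HomologyVanishes k Δ m := by
  rw [Submodule.Quotient.subsingleton_iff, Submodule.comap_subtype_eq_top]
  constructor
  · intro hle f hf hcyc
    obtain ⟨f, rfl⟩ := exists_extendChains_eq (p := m) (by push_cast; ring) hf
    have hf₀ : f ∈ cycles k Δ m := by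
      refine LinearMap.mem_ker.2 (extendChains_injective ?_)
      rw [extendChains_boundary hΔ, hcyc, map_zero]
    obtain ⟨g, rfl⟩ := hle hf₀
    refine ⟨extendChains k Δ _ g, extendChains_mem_faceChains (by push_cast; ring) g, ?_⟩
    rw [LinearMap.comp_apply, LinearEquiv.coe_coe, extendChains_chainsCongr,
      extendChains_boundary hΔ]
  · intro hvan f hf
    have hcyc : ∂ (extendChains k Δ m f) = 0 := by
      rw [← extendChains_boundary hΔ, LinearMap.mem_ker.1 hf, map_zero]
    obtain ⟨g, hg, hdg⟩ := hvan _ (extendChains_mem_faceChains (by push_cast; ring) f) hcyc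
    obtain ⟨g, rfl⟩ := exists_extendChains_eq (p := m + 1) (by push_cast; ring) hg
    refine ⟨g, extendChains_injective ?_⟩
    rw [LinearMap.comp_apply, LinearEquiv.coe_coe, extendChains_chainsCongr,
      extendChains_boundary hΔ, hdg]

end Bridge

theorem stmt5_general (k : Type) [Field k] {n : ℕ} (Δ : Set (Finset (Fin n)))
    (hΔ : IsComplex Δ) (c : ℕ) :
    (∀ p : ℤ, (c : ℤ) ≤ p → ∀ R : Finset (Fin n),
        Subsingleton (ReducedHomology k (restrict Δ R) p)) ↔
    (∀ S ∈ Δ, Subsingleton (ReducedHomology k (link Δ S) (c : ℤ))) := by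
  have hres : ∀ R, IsComplex (restrict Δ R) := fun R => sub_empty_eq_restrict Δ R ▸ hΔ.sub R ∅
  have hlink : ∀ S, IsComplex (link Δ S) := fun S => sub_compl_eq_link Δ S ▸ hΔ.sub Sᶜ S
  calc _ ↔ ∀ m ≥ c, ∀ R, HomologyVanishes k (restrict Δ R) m := by
        refine ⟨fun h m hm R => ?_, fun h p hp R => ?_⟩
        · exact (subsingleton_reducedHomology_iff (hres R) m).1 (h m (by exact_mod_cast hm) R)
        · lift p to ℕ using (Int.natCast_nonneg c).trans hp
          exact (subsingleton_reducedHomology_iff (hres R) p).2 (h p (by exact_mod_cast hp) R)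
    _ ↔ ∀ S ∈ Δ, HomologyVanishes k (link Δ S) c := homologyVanishes_restrict_iff_link hΔ c
    _ ↔ _ := by simp only [subsingleton_reducedHomology_iff (hlink _)]

/-- `Δ` is CLeray iff `H̃_c(lk_Δ S) = 0` for all faces `S`. -/
theorem stmt5 (k : Type) [Field k] {n : ℕ} (Δ : Set (Finset (Fin n)))
    (hΔ : IsComplex Δ) (c : ℕ) (hc : IsFrame Δ c) :
    (∀ p : ℤ, (c : ℤ) ≤ p → ∀ R : Finset (Fin n),
        Subsingleton (ReducedHomology k (restrict Δ R) p)) ↔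
    (∀ S ∈ Δ, Subsingleton (ReducedHomology k (link Δ S) (c : ℤ))) :=
  stmt5_general k Δ hΔ c

end SCx
end
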